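/- arXiv:1105.4444 — 3 statements merged into one kernel-verified Lean document; each statement's English description precedes it below -/
import Mathlib

section
/- Let G be a group, φ a homogeneous quasimorphism on G with defect D(φ), and g an element of the commutator subgroup [G,G]. Then |φ(g)| ≤ 2 · D(φ) · scl(g). -/
/-- The set of defect values of a function `φ : G → ℝ`. -/
def defectSet {G : Type*} [Group G] (φ : G → ℝ) : Set ℝ :=
  {x : ℝ | ∃ g h : G, x = |φ (g * h) - φ g - φ h|}

/-- The defect `D(φ) = sup_{g,h} |φ(gh) − φ(g) − φ(h)|`. -/
noncomputable def defect {G : Type*} [Group G] (φ : G → ℝ) : ℝ :=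
  sSup (defectSet φ)

/-- `φ` is a quasimorphism if its defect is finite. -/
def IsQuasimorphism {G : Type*} [Group G] (φ : G → ℝ) : Prop :=
  BddAbove (defectSet φ)

/-- `φ` is homogeneous if `φ(gⁿ) = n·φ(g)` for all `g` and all integers `n`. -/
def IsHomogeneous {G : Type*} [Group G] (φ : G → ℝ) : Prop :=
  ∀ (g : G) (n : ℤ), φ (g ^ n) = n * φ g

open scoped commutatorElement

/-- `g` can be written as a product of `n` commutators. -/
def IsProdOfCommutators {G : Type*} [Group G] (g : G) (n : ℕ) : Prop :=
  ∃ a b : Fin n → G, g = (List.ofFn fun i => ⁅a i, b i⁆).prod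

/-- The commutator length of `g`: the least `n` such that `g` is a product of `n`
commutators. -/
noncomputable def cl {G : Type*} [Group G] (g : G) : ℕ :=
  sInf {n : ℕ | IsProdOfCommutators g n}

/-- The stable commutator length `scl(g) = lim cl(gⁿ)/n = inf_{n ≥ 1} cl(gⁿ)/n`. -/
noncomputable def scl {G : Type*} [Group G] (g : G) : ℝ :=
  sInf {x : ℝ | ∃ n : ℕ, 0 < n ∧ x = (cl (g ^ n) : ℝ) / n}

/-!
A homogeneous quasimorphism is invariant under conjugation (the conjugation error is at most
`2 D(φ)` and scales linearly under powers), so it is bounded by `D(φ)` on commutators, being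
`φ(aba⁻¹) + φ(b⁻¹) = 0` up to one defect. Each further factor of a product of commutators costs
at most `2 D(φ)`, so `n |φ g| = |φ (gⁿ)| ≤ 2 D(φ) cl(gⁿ)`; divide by `n` and take the infimum.
-/

lemma eq_zero_of_forall_nat_mul_abs_le {x C : ℝ} (h : ∀ n : ℕ, n * |x| ≤ C) : x = 0 := by
  by_contra hx
  obtain ⟨n, hn⟩ := exists_nat_gt (C / |x|)
  rw [div_lt_iff₀ (abs_pos.2 hx)] at hn
  linarith [h n]

section Quasimorphism

variable {G : Type*} [Group G] {φ : G → ℝ}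

namespace IsHomogeneous

lemma map_pow (hh : IsHomogeneous φ) (g : G) (n : ℕ) : φ (g ^ n) = n * φ g := by
  simpa using hh g n

lemma map_inv (hh : IsHomogeneous φ) (g : G) : φ g⁻¹ = -φ g := by
  simpa using hh g (-1)

end IsHomogeneous

namespace IsQuasimorphism

lemma abs_map_mul_sub_le (hq : IsQuasimorphism φ) (g h : G) :
    |φ (g * h) - φ g - φ h| ≤ defect φ :=
  le_csSup hq ⟨g, h, rfl⟩

lemma defect_nonneg (hq : IsQuasimorphism φ) : 0 ≤ defect φ :=
  (abs_nonneg _).trans (hq.abs_map_mul_sub_le 1 1)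

lemma abs_map_mul_le (hq : IsQuasimorphism φ) (g h : G) :
    |φ (g * h)| ≤ |φ g| + |φ h| + defect φ := by
  calc |φ (g * h)| = |(φ (g * h) - φ g - φ h) + φ g + φ h| := by ring_nf
    _ ≤ |φ (g * h) - φ g - φ h| + |φ g| + |φ h| := abs_add_three _ _ _
    _ ≤ |φ g| + |φ h| + defect φ := by linarith [hq.abs_map_mul_sub_le g h]

lemma abs_map_conj_sub_le (hq : IsQuasimorphism φ) (hh : IsHomogeneous φ) (h g : G) :
    |φ (h * g * h⁻¹) - φ g| ≤ 2 * defect φ := by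
  have h₁ := hq.abs_map_mul_sub_le h (g * h⁻¹)
  have h₂ := hq.abs_map_mul_sub_le g h⁻¹
  rw [hh.map_inv, ← mul_assoc] at *
  calc |φ (h * g * h⁻¹) - φ g|
      = |(φ (h * g * h⁻¹) - φ h - φ (g * h⁻¹)) + (φ (g * h⁻¹) - φ g - -φ h)| := by ring_nf
    _ ≤ defect φ + defect φ := (abs_add_le _ _).trans (add_le_add h₁ h₂)
    _ = 2 * defect φ := by ring

lemma map_conj (hq : IsQuasimorphism φ) (hh : IsHomogeneous φ) (h g : G) :
    φ (h * g * h⁻¹) = φ g := by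
  refine sub_eq_zero.1 (eq_zero_of_forall_nat_mul_abs_le (C := 2 * defect φ) fun n => ?_)
  have := hq.abs_map_conj_sub_le hh h (g ^ n)
  rwa [← conj_pow, hh.map_pow, hh.map_pow, ← mul_sub, abs_mul, Nat.abs_cast] at this

lemma abs_map_commutatorElement_le (hq : IsQuasimorphism φ) (hh : IsHomogeneous φ) (a b : G) :
    |φ ⁅a, b⁆| ≤ defect φ := by
  have := hq.abs_map_mul_sub_le (a * b * a⁻¹) b⁻¹
  rwa [hq.map_conj hh, hh.map_inv, sub_neg_eq_add, sub_add_cancel, ← commutatorElement_def]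
    at this

lemma abs_map_le_of_isProdOfCommutators (hq : IsQuasimorphism φ) (hh : IsHomogeneous φ)
    {g : G} {n : ℕ} (hg : IsProdOfCommutators g n) : |φ g| ≤ 2 * n * defect φ := by
  induction n generalizing g with
  | zero =>
    obtain ⟨a, b, rfl⟩ := hg
    simpa using hh.map_pow 1 0
  | succ n ih =>
    obtain ⟨a, b, rfl⟩ := hg
    set tail := (List.ofFn fun i => ⁅a i.succ, b i.succ⁆).prod
    have hhead := hq.abs_map_commutatorElement_le hh (a 0) (b 0)
    have htail : |φ tail| ≤ 2 * n * defect φ := ih ⟨_, _, rfl⟩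
    rw [List.ofFn_succ, List.prod_cons]
    calc |φ (⁅a 0, b 0⁆ * tail)| ≤ |φ ⁅a 0, b 0⁆| + |φ tail| + defect φ := hq.abs_map_mul_le _ _
      _ ≤ 2 * ↑(n + 1) * defect φ := by push_cast; linarith

end IsQuasimorphism

lemma isProdOfCommutators_prod (l : List G) (hl : ∀ x ∈ l, x ∈ commutatorSet G) :
    IsProdOfCommutators l.prod l.length := by
  choose a b hab using fun i : Fin l.length => hl l[i] (List.getElem_mem _)
  exact ⟨a, b, by simp [hab]⟩

lemma exists_isProdOfCommutators {g : G} (hg : g ∈ commutator G) :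
    ∃ n, IsProdOfCommutators g n := by
  rw [commutator_eq_closure, ← Subgroup.mem_toSubmonoid, Subgroup.closure_toSubmonoid] at hg
  obtain ⟨l, hl, rfl⟩ := Submonoid.exists_list_of_mem_closure hg
  refine ⟨_, isProdOfCommutators_prod l fun x hx => ?_⟩
  rcases hl x hx with h | ⟨a, b, h⟩
  exacts [h, ⟨b, a, by rw [← commutatorElement_inv, h, inv_inv]⟩]

lemma IsQuasimorphism.abs_map_le_two_defect_mul_cl (hq : IsQuasimorphism φ)
    (hh : IsHomogeneous φ) {g : G} (hg : g ∈ commutator G) :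
    |φ g| ≤ 2 * defect φ * cl g := by
  have := hq.abs_map_le_of_isProdOfCommutators hh (Nat.sInf_mem (exists_isProdOfCommutators hg))
  rwa [mul_right_comm] at this

end Quasimorphism

/-- Bavard's inequality: `|φ(g)| ≤ 2 · D(φ) · scl(g)` for a homogeneous quasimorphism
`φ` and `g ∈ [G,G]`. -/
theorem abs_le_two_defect_mul_scl {G : Type*} [Group G] (φ : G → ℝ)
    (hq : IsQuasimorphism φ) (hh : IsHomogeneous φ) (g : G) (hg : g ∈ commutator G) :
    |φ g| ≤ 2 * defect φ * scl g := by
  rw [scl, ← smul_eq_mul, ← Real.sInf_smul_of_nonneg (by linarith [hq.defect_nonneg])]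
  refine le_csInf ⟨_, Set.smul_mem_smul_set ⟨1, one_pos, rfl⟩⟩ ?_
  rintro _ ⟨_, ⟨n, hn, rfl⟩, rfl⟩
  have hn' : (0 : ℝ) < n := Nat.cast_pos.2 hn
  have hpow := hq.abs_map_le_two_defect_mul_cl hh ((commutator G).pow_mem hg n)
  rw [hh.map_pow, abs_mul, Nat.abs_cast] at hpow
  show _ ≤ 2 * defect φ * (_ / _)
  rw [mul_div_assoc', le_div_iff₀ hn']
  linarith
end

section
/- Let G be a group such that any two elements a, b ∈ G are contained in a subgroup H ≤ G admitting a sequence of elements g₁, g₂, g₃, … of G with the property that for all indices i ≠ j and all x, y ∈ H, the conjugate gᵢ x gᵢ⁻¹ commutes with gⱼ y gⱼ⁻¹. Then every homogeneous quasimorphism on G is a homomorphism. -/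
lemma eq_zero_of_forall_abs_natCast_mul_le {X C : ℝ} (h : ∀ n : ℕ, |(n : ℝ) * X| ≤ C) :
    X = 0 := by
  by_contra hX
  have hXpos : 0 < |X| := abs_pos.mpr hX
  obtain ⟨n, hn⟩ := exists_nat_gt (C / |X|)
  have hlt : C < n * |X| := (div_lt_iff₀ hXpos).mp hn
  have hle := h n
  rw [abs_mul, Nat.abs_cast] at hle
  linarith

section Quasimorphism

variable {G : Type*} [Group G] {φ : G → ℝ}

lemma IsQuasimorphism.abs_map_mul_sub_le_s10 (hq : IsQuasimorphism φ) (g h : G) :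
    |φ (g * h) - φ g - φ h| ≤ defect φ :=
  le_csSup hq ⟨g, h, rfl⟩

lemma IsQuasimorphism.map_mul_of_forall_scaled (hq : IsQuasimorphism φ) {a b : G}
    (hscale : ∀ n : ℕ, ∃ s t : G,
      φ (s * t) = n * φ (a * b) ∧ φ s = n * φ a ∧ φ t = n * φ b) :
    φ (a * b) = φ a + φ b := by
  suffices φ (a * b) - φ a - φ b = 0 by linarith
  refine eq_zero_of_forall_abs_natCast_mul_le (C := defect φ) fun n => ?_
  obtain ⟨s, t, hst, hs, ht⟩ := hscale n
  calc |(n : ℝ) * (φ (a * b) - φ a - φ b)| = |φ (s * t) - φ s - φ t| := by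
        rw [hst, hs, ht]; ring_nf
    _ ≤ defect φ := hq.abs_map_mul_sub_le_s10 s t

lemma IsHomogeneous.map_pow_s10 (hh : IsHomogeneous φ) (g : G) (n : ℕ) : φ (g ^ n) = n * φ g := by
  simpa using hh g n

lemma IsHomogeneous.map_one (hh : IsHomogeneous φ) : φ 1 = 0 := by
  simpa using hh.map_pow_s10 1 0

lemma IsHomogeneous.map_inv_s10 (hh : IsHomogeneous φ) (g : G) : φ g⁻¹ = -φ g := by
  simpa using hh g (-1)

lemma IsHomogeneous.abs_map_conj_sub_le (hq : IsQuasimorphism φ) (hh : IsHomogeneous φ)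
    (g y : G) : |φ (g * y * g⁻¹) - φ y| ≤ 2 * defect φ := by
  have h₁ := hq.abs_map_mul_sub_le_s10 g (y * g⁻¹)
  have h₂ := hq.abs_map_mul_sub_le_s10 y g⁻¹
  rw [← mul_assoc] at h₁
  rw [hh.map_inv_s10] at h₂
  calc |φ (g * y * g⁻¹) - φ y|
      = |(φ (g * y * g⁻¹) - φ g - φ (y * g⁻¹)) + (φ (y * g⁻¹) - φ y - -φ g)| := by ring_nf
    _ ≤ 2 * defect φ := (abs_add_le _ _).trans (by linarith)

lemma IsHomogeneous.map_conj (hq : IsQuasimorphism φ) (hh : IsHomogeneous φ) (g x : G) :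
    φ (g * x * g⁻¹) = φ x := by
  suffices φ (g * x * g⁻¹) - φ x = 0 by linarith
  refine eq_zero_of_forall_abs_natCast_mul_le (C := 2 * defect φ) fun n => ?_
  have hbound := hh.abs_map_conj_sub_le hq g (x ^ n)
  rwa [← conj_pow, hh.map_pow_s10, hh.map_pow_s10, ← mul_sub] at hbound

lemma IsHomogeneous.map_mul_of_commute (hq : IsQuasimorphism φ) (hh : IsHomogeneous φ)
    {s t : G} (hst : Commute s t) : φ (s * t) = φ s + φ t :=
  hq.map_mul_of_forall_scaled fun n =>
    ⟨s ^ n, t ^ n, by rw [← hst.mul_pow, hh.map_pow_s10], hh.map_pow_s10 s n, hh.map_pow_s10 t n⟩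

end Quasimorphism

section ConjProd

variable {G : Type*} [Group G]

def conjProd (g : ℕ → G) (x : G) : ℕ → G
  | 0 => 1
  | n + 1 => conjProd g x n * (g n * x * (g n)⁻¹)

def ConjugatesCommute (H : Subgroup G) (g : ℕ → G) : Prop :=
  ∀ i j : ℕ, i ≠ j → ∀ x ∈ H, ∀ y ∈ H, Commute (g i * x * (g i)⁻¹) (g j * y * (g j)⁻¹)

variable {H : Subgroup G} {g : ℕ → G}

lemma commute_conjProd (hg : ConjugatesCommute H g) {x y : G} (hx : x ∈ H) (hy : y ∈ H)
    {n j : ℕ} (hnj : n ≤ j) :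
    Commute (conjProd g x n) (g j * y * (g j)⁻¹) := by
  induction n with
  | zero => exact Commute.one_left _
  | succ k ih => exact (ih (by omega)).mul_left (hg k j (by omega) x hx y hy)

lemma conjProd_mul (hg : ConjugatesCommute H g) {a b : G} (ha : a ∈ H) (hb : b ∈ H) (n : ℕ) :
    conjProd g (a * b) n = conjProd g a n * conjProd g b n := by
  induction n with
  | zero => simp [conjProd]
  | succ k ih =>
    have hconj : g k * (a * b) * (g k)⁻¹ = (g k * a * (g k)⁻¹) * (g k * b * (g k)⁻¹) := by
      group
    have hcomm := commute_conjProd hg hb ha (le_refl k)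
    simp only [conjProd, ih, hconj]
    calc conjProd g a k * conjProd g b k * (g k * a * (g k)⁻¹ * (g k * b * (g k)⁻¹))
        = conjProd g a k * (conjProd g b k * (g k * a * (g k)⁻¹)) * (g k * b * (g k)⁻¹) := by
          group
      _ = conjProd g a k * (g k * a * (g k)⁻¹) * (conjProd g b k * (g k * b * (g k)⁻¹)) := by
          rw [hcomm.eq]; group

lemma IsHomogeneous.map_conjProd {φ : G → ℝ} (hq : IsQuasimorphism φ) (hh : IsHomogeneous φ)
    (hg : ConjugatesCommute H g) {x : G} (hx : x ∈ H) (n : ℕ) : φ (conjProd g x n) = n * φ x := by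
  induction n with
  | zero => simp [conjProd, hh.map_one]
  | succ k ih =>
    rw [conjProd, hh.map_mul_of_commute hq (commute_conjProd hg hx hx le_rfl), ih,
      hh.map_conj hq]
    push_cast
    ring

end ConjProd

/-- If any two elements of `G` lie in a subgroup `H` admitting a sequence `g₁, g₂, …`
of elements of `G` whose distinct conjugates of `H` commute elementwise, then every
homogeneous quasimorphism on `G` is a homomorphism. -/
theorem homogeneous_quasimorphism_is_hom {G : Type*} [Group G]
    (hyp : ∀ a b : G, ∃ H : Subgroup G, a ∈ H ∧ b ∈ H ∧ ∃ g : ℕ → G,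
      ∀ i j : ℕ, i ≠ j → ∀ x ∈ H, ∀ y ∈ H,
        Commute (g i * x * (g i)⁻¹) (g j * y * (g j)⁻¹))
    (φ : G → ℝ) (hq : IsQuasimorphism φ) (hh : IsHomogeneous φ) :
    ∀ a b : G, φ (a * b) = φ a + φ b := by
  intro a b
  obtain ⟨H, ha, hb, g, hg⟩ := hyp a b
  refine hq.map_mul_of_forall_scaled fun n =>
    ⟨conjProd g a n, conjProd g b n, ?_, hh.map_conjProd hq hg ha n, hh.map_conjProd hq hg hb n⟩
  rw [← conjProd_mul hg ha hb, hh.map_conjProd hq hg (H.mul_mem ha hb)]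
end

section
/- Let G be a group such that every homogeneous quasimorphism on G is a homomorphism. Then scl(g) = 0 for every element g of the commutator subgroup [G,G]. -/
open scoped commutatorElement

/-!
Suppose `scl g > 0` and let `w = g ^ M` with `M * scl g > 2`. Since `h ↦ δ_h` is a homomorphism
from `G` to the real 1-chains modulo the boundaries `δ_{ab} - δ_a - δ_b`, the chain `δ_w` bounds a
real 2-chain `f`. Approximating `f` by rational chains and clearing denominators produces a word
in `G`, made of relators `(ab) b⁻¹ a⁻¹` and `N` letters `w`, in which every letter has exponent sum
zero; such a word is a product of at most half its length of commutators. Hence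
`2 scl w ≤ 3 ‖f‖₁ + 1`, and the filling seminorm of `δ_w` exceeds `1`. Hahn–Banach for this
seminorm gives `φ₀ : G → ℝ` of defect `≤ 1` with `φ₀ w > 1`. The homogenization of `φ₀` is a
homogeneous quasimorphism within `1` of `φ₀`, hence positive at `w ∈ [G, G]`, so it is not a
homomorphism.
-/

open Finsupp

namespace IsProdOfCommutators

variable {G : Type*} [Group G]

theorem one : IsProdOfCommutators (1 : G) 0 :=
  ⟨Fin.elim0, Fin.elim0, by simp⟩

theorem commutatorElement_mul {v : G} {m : ℕ} (h : IsProdOfCommutators v m) (x y : G) :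
    IsProdOfCommutators (⁅x, y⁆ * v) (m + 1) := by
  obtain ⟨a, b, rfl⟩ := h
  exact ⟨Fin.cons x a, Fin.cons y b, by simp [List.ofFn_succ]⟩

theorem cl_le {g : G} {m : ℕ} (h : IsProdOfCommutators g m) : cl g ≤ m :=
  Nat.sInf_le h

end IsProdOfCommutators

section Words

variable {G : Type*}

open scoped Classical in
noncomputable def wordExponent (L : List (G × Bool)) (x : G) : ℤ :=
  L.count (x, true) - L.count (x, false)

theorem wordExponent_append (L₁ L₂ : List (G × Bool)) (x : G) :
    wordExponent (L₁ ++ L₂) x = wordExponent L₁ x + wordExponent L₂ x := by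
  simp only [wordExponent, List.count_append]
  push_cast
  ring

theorem wordExponent_flatten_replicate (L : List (G × Bool)) (m : ℕ) (x : G) :
    wordExponent (List.replicate m L).flatten x = m * wordExponent L x := by
  induction m with
  | zero => simp [wordExponent]
  | succ m ih =>
    rw [List.replicate_succ', List.flatten_append, wordExponent_append, ih]
    simp
    ring

theorem wordExponent_replicate (x z : G) (N : ℕ) :
    wordExponent (List.replicate N (x, true)) z = N * (single x 1 : G →₀ ℤ) z := by
  classical
  by_cases h : x = z <;> simp [wordExponent, List.count_replicate, h]

variable [Group G]

def wordProd (L : List (G × Bool)) : G :=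
  (L.map fun p => cond p.2 p.1 p.1⁻¹).prod

@[simp] theorem wordProd_nil : wordProd ([] : List (G × Bool)) = 1 := rfl

@[simp] theorem wordProd_cons (p : G × Bool) (L : List (G × Bool)) :
    wordProd (p :: L) = cond p.2 p.1 p.1⁻¹ * wordProd L := by
  simp [wordProd]

@[simp] theorem wordProd_append (L₁ L₂ : List (G × Bool)) :
    wordProd (L₁ ++ L₂) = wordProd L₁ * wordProd L₂ := by
  simp [wordProd]

theorem wordProd_flatten_replicate (L : List (G × Bool)) (m : ℕ) :
    wordProd (List.replicate m L).flatten = wordProd L ^ m := by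
  induction m with
  | zero => simp
  | succ m ih =>
    rw [List.replicate_succ', List.flatten_append, wordProd_append, ih]
    simp [pow_succ]

/-- Cancel the first letter against a later inverse of it: `a P a⁻¹ Q = ⁅a, P⁆ (P Q)`. -/
theorem exists_isProdOfCommutators_wordProd (L : List (G × Bool))
    (hL : ∀ x, wordExponent L x = 0) :
    ∃ m, 2 * m ≤ L.length ∧ IsProdOfCommutators (wordProd L) m := by
  classical
  induction h : L.length using Nat.strong_induction_on generalizing L with
  | _ len ih =>
  match L with
  | [] => exact ⟨0, by simp, IsProdOfCommutators.one⟩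
  | (x, ε) :: L₁ =>
    have hmem : (x, !ε) ∈ L₁ := by
      have := hL x
      cases ε <;> simp [wordExponent] at this ⊢ <;> exact List.count_pos_iff.mp (by omega)
    obtain ⟨P, Q, rfl⟩ := List.append_of_mem hmem
    have hPQ : ∀ z, wordExponent (P ++ Q) z = 0 := by
      intro z
      have := hL z
      simp only [wordExponent, List.count_cons, List.count_append] at this ⊢
      cases ε <;> by_cases hz : x = z <;> simp [hz] at this ⊢ <;> omega
    obtain ⟨m, hm, hprod⟩ := ih _ (by simp [← h]) (P ++ Q) hPQ rfl
    refine ⟨m + 1, by simp [← h] at hm ⊢; omega, ?_⟩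
    have : wordProd ((x, ε) :: (P ++ (x, !ε) :: Q)) =
        ⁅cond ε x x⁻¹, wordProd P⁆ * wordProd (P ++ Q) := by
      cases ε <;> simp [commutatorElement_def, mul_assoc]
    rw [this]
    exact hprod.commutatorElement_mul _ _

end Words

section Chains

variable {G : Type*} [Group G]

/-- Minus the bar-complex boundary `[b] - [ab] + [a]` of the 2-simplex `[a|b]`. -/
noncomputable def triangle (R : Type*) [Ring R] (p : G × G) : G →₀ R :=
  single (p.1 * p.2) 1 - single p.1 1 - single p.2 1

theorem intCast_triangle_apply (R : Type*) [Ring R] (p : G × G) (z : G) :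
    ((triangle ℤ p z : ℤ) : R) = triangle R p z := by
  classical
  simp only [triangle, Finsupp.sub_apply, single_apply]
  split_ifs <;> norm_num

theorem exists_word_zsmul_triangle (p : G × G) (k : ℤ) :
    ∃ L : List (G × Bool), wordProd L = 1 ∧ (∀ z, wordExponent L z = k * triangle ℤ p z) ∧
      L.length = 3 * k.natAbs := by
  classical
  obtain ⟨m, rfl | rfl⟩ := Int.eq_nat_or_neg k
  · refine ⟨(List.replicate m [(p.1 * p.2, true), (p.2, false), (p.1, false)]).flatten,
      by simp [wordProd_flatten_replicate], fun z => ?_, by simp [mul_comm]⟩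
    rw [wordExponent_flatten_replicate]
    congr 1
    simp only [wordExponent, triangle, Finsupp.sub_apply, single_apply, List.count_cons,
      List.count_nil]
    by_cases h₁ : p.1 * p.2 = z <;> by_cases h₂ : p.1 = z <;> by_cases h₃ : p.2 = z <;>
      simp [h₁, h₂, h₃] <;> ring
  · refine ⟨(List.replicate m [(p.1, true), (p.2, true), (p.1 * p.2, false)]).flatten,
      by simp [wordProd_flatten_replicate], fun z => ?_, by simp [mul_comm]⟩
    rw [wordExponent_flatten_replicate]
    simp only [wordExponent, triangle, Finsupp.sub_apply, single_apply, List.count_cons,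
      List.count_nil]
    by_cases h₁ : p.1 * p.2 = z <;> by_cases h₂ : p.1 = z <;> by_cases h₃ : p.2 = z <;>
      simp [h₁, h₂, h₃] <;> ring

theorem exists_word_sum_zsmul_triangle (s : Finset (G × G)) (n : G × G → ℤ) :
    ∃ L : List (G × Bool), wordProd L = 1 ∧
      (∀ z, wordExponent L z = ∑ i ∈ s, n i * triangle ℤ i z) ∧
      L.length = 3 * ∑ i ∈ s, (n i).natAbs := by
  classical
  induction s using Finset.induction_on with
  | empty => exact ⟨[], rfl, by simp [wordExponent], rfl⟩
  | insert i s hi ih =>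
    obtain ⟨L, hprod, hexp, hlen⟩ := ih
    obtain ⟨L₀, hprod₀, hexp₀, hlen₀⟩ := exists_word_zsmul_triangle i (n i)
    refine ⟨L₀ ++ L, by simp [hprod, hprod₀], fun z => ?_, ?_⟩
    · rw [wordExponent_append, hexp₀, hexp, Finset.sum_insert hi]
    · rw [List.length_append, hlen₀, hlen, Finset.sum_insert hi, mul_add]

theorem two_mul_cl_pow_le (w : G) (N : ℕ) (s : Finset (G × G)) (n : G × G → ℤ)
    (hn : ∀ z, ∑ i ∈ s, n i * triangle ℤ i z = N * (single w 1 : G →₀ ℤ) z) :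
    2 * cl (w ^ N) ≤ 3 * ∑ i ∈ s, (n i).natAbs + N := by
  obtain ⟨L, hprod, hexp, hlen⟩ := exists_word_sum_zsmul_triangle s (-n)
  have hzero : ∀ z, wordExponent (L ++ List.replicate N (w, true)) z = 0 := by
    intro z
    simp [wordExponent_append, hexp, wordExponent_replicate, ← hn]
  obtain ⟨m, hm, hprodm⟩ := exists_isProdOfCommutators_wordProd _ hzero
  have hw : wordProd (L ++ List.replicate N (w, true)) = w ^ N := by
    rw [wordProd_append, hprod, one_mul]
    simp [wordProd]
  rw [hw] at hprodm
  have := hprodm.cl_le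
  simp [hlen] at hm
  omega

end Chains

theorem exists_ratLinearMap_near (s : Finset ℝ) {ε : ℝ} (hε : 0 < ε) :
    ∃ π : ℝ →ₗ[ℚ] ℚ, π 1 = 1 ∧ ∀ x ∈ s, |(π x : ℝ) - x| ≤ ε := by
  have hone : LinearIndepOn ℚ id ({1} : Set ℝ) := LinearIndepOn.singleton one_ne_zero
  set B := Module.Basis.extend hone
  have hB : ∀ j, B j = j := Module.Basis.extend_apply_self hone
  set K : ℝ := ∑ x ∈ s, ∑ j ∈ (B.repr x).support, |(B.repr x j : ℝ)|
  obtain ⟨m, hm⟩ := exists_nat_gt (K / ε)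
  have hm₀ : (0 : ℝ) < m := lt_of_le_of_lt (by positivity) hm
  -- Rounding every basis vector down to `ℤ / m` keeps the basis vector `1` fixed.
  set q : ℝ → ℚ := fun y => ⌊y * m⌋ / m
  have hq : ∀ y, |(q y : ℝ) - y| ≤ 1 / m := by
    intro y
    have h : (q y : ℝ) - y = (⌊y * m⌋ - y * m) / m := by
      simp only [q, Rat.cast_div, Rat.cast_intCast, Rat.cast_natCast]
      field_simp
    rw [h, abs_div, abs_of_pos hm₀]
    gcongr
    rw [abs_le]
    constructor <;> linarith [Int.floor_le (y * m), Int.lt_floor_add_one (y * m)]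
  refine ⟨B.constr ℚ (fun j => q j), ?_, fun x hxs => ?_⟩
  · have h₁ := B.constr_basis ℚ (fun j => q j) ⟨1, hone.subset_extend _ rfl⟩
    rw [hB] at h₁
    simp [h₁, q, (Nat.cast_pos.mp hm₀).ne']
  have hπ : (B.constr ℚ (fun j => q j) x : ℝ) =
      ∑ j ∈ (B.repr x).support, (B.repr x j : ℝ) * q j := by
    simp [B.constr_apply, Finsupp.sum]
  have hx : x = ∑ j ∈ (B.repr x).support, (B.repr x j : ℝ) * j := by
    conv_lhs => rw [← B.linearCombination_repr x]
    simp [Finsupp.linearCombination_apply, Finsupp.sum, hB, Rat.smul_def]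
  have hsum : (B.constr ℚ (fun j => q j) x : ℝ) - x =
      ∑ j ∈ (B.repr x).support, (B.repr x j : ℝ) * ((q j : ℝ) - j) := by
    rw [hπ]
    conv_lhs => arg 2; rw [hx]
    simp only [mul_sub, Finset.sum_sub_distrib]
  calc |(B.constr ℚ (fun j => q j) x : ℝ) - x|
      ≤ ∑ j ∈ (B.repr x).support, |(B.repr x j : ℝ)| * (1 / m) := by
        rw [hsum]
        refine (Finset.abs_sum_le_sum_abs _ _).trans (Finset.sum_le_sum fun j _ => ?_)
        rw [abs_mul]
        exact mul_le_mul_of_nonneg_left (hq j) (abs_nonneg _)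
    _ ≤ K * (1 / m) := by
        rw [← Finset.sum_mul]
        gcongr
        exact Finset.single_le_sum (f := fun x => ∑ j ∈ (B.repr x).support, |(B.repr x j : ℝ)|)
          (fun _ _ => Finset.sum_nonneg fun _ _ => abs_nonneg _) hxs
    _ ≤ ε := by
        rw [div_lt_iff₀ hε] at hm
        rw [mul_one_div, div_le_iff₀ hm₀]
        linarith

theorem exists_pos_nat_mul_eq_intCast {ι : Type*} (s : Finset ι) (q : ι → ℚ) :
    ∃ N : ℕ, 0 < N ∧ ∀ i ∈ s, ∃ n : ℤ, (n : ℚ) = N * q i := by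
  refine ⟨∏ i ∈ s, (q i).den, Finset.prod_pos fun i _ => (q i).den_pos, fun i hi => ?_⟩
  obtain ⟨k, hk⟩ := Finset.dvd_prod_of_mem (fun i => (q i).den) hi
  refine ⟨k * (q i).num, ?_⟩
  rw [hk]
  push_cast
  rw [← Rat.den_mul_eq_num]
  ring

theorem exists_int_solution_near {ι κ : Type*} (s : Finset ι) (A : ι → κ → ℤ) (b : κ → ℤ)
    (c : ι → ℝ) (hc : ∀ k, ∑ i ∈ s, c i * A i k = b k) {ε : ℝ} (hε : 0 < ε) :
    ∃ (N : ℕ) (n : ι → ℤ), 0 < N ∧ (∀ k, ∑ i ∈ s, n i * A i k = N * b k) ∧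
      ∀ i ∈ s, |(n i : ℝ)| ≤ N * (|c i| + ε) := by
  obtain ⟨π, hπ₁, hπ⟩ := exists_ratLinearMap_near (s.image c) hε
  have hπc : ∀ k, ∑ i ∈ s, π (c i) * A i k = b k := by
    intro k
    have := congrArg π (hc k)
    simp only [map_sum, mul_comm (c _), ← zsmul_eq_mul, map_zsmul] at this
    rw [← mul_one ((b k : ℤ) : ℝ), ← zsmul_eq_mul, map_zsmul, hπ₁, zsmul_one] at this
    simpa [zsmul_eq_mul, mul_comm] using this
  obtain ⟨N, hN, hint⟩ := exists_pos_nat_mul_eq_intCast s (fun i => π (c i))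
  choose! n hn using hint
  refine ⟨N, n, hN, fun k => ?_, fun i hi => ?_⟩
  · have : ∑ i ∈ s, (n i : ℚ) * A i k = N * b k := by
      rw [Finset.sum_congr rfl fun i hi => by rw [hn i hi], ← hπc k, Finset.mul_sum]
      simp only [mul_assoc]
    exact_mod_cast this
  · have hni : (n i : ℝ) = N * (π (c i) : ℝ) := by exact_mod_cast hn i hi
    have hclose := hπ (c i) (Finset.mem_image_of_mem c hi)
    rw [hni, abs_mul, Nat.abs_cast]
    gcongr
    calc |(π (c i) : ℝ)| = |c i + ((π (c i) : ℝ) - c i)| := by ring_nf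
      _ ≤ |c i| + ε := (abs_add_le _ _).trans (by gcongr)

theorem map_eq_zero_of_mem_commutator {G A : Type*} [Group G] [AddCommGroup A] {φ : G → A}
    (hφ : ∀ a b, φ (a * b) = φ a + φ b) {w : G} (hw : w ∈ commutator G) : φ w = 0 :=
  Multiplicative.ofAdd.injective <|
    Abelianization.commutator_subset_ker (MonoidHom.mk' (fun g => Multiplicative.ofAdd (φ g)) hφ) hw

theorem Seminorm.exists_dual_apply_eq_and_abs_le {E : Type*} [AddCommGroup E] [Module ℝ E]
    (p : Seminorm ℝ E) (x₀ : E) : ∃ F : Module.Dual ℝ E, F x₀ = p x₀ ∧ ∀ x, |F x| ≤ p x := by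
  have H : ∀ c : ℝ, c • x₀ = 0 → c • p x₀ = 0 := by
    intro c hc
    rcases smul_eq_zero.mp hc with rfl | rfl <;> simp
  set f : E →ₗ.[ℝ] ℝ := LinearPMap.mkSpanSingleton' x₀ (p x₀) H
  have hf : ∀ x : f.domain, f x ≤ p x := by
    rintro ⟨x, hx⟩
    obtain ⟨c, rfl⟩ := Submodule.mem_span_singleton.mp hx
    rw [LinearPMap.mkSpanSingleton'_apply, map_smul_eq_mul, smul_eq_mul, Real.norm_eq_abs]
    exact mul_le_mul_of_nonneg_right (le_abs_self c) (apply_nonneg p x₀)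
  obtain ⟨F, hFf, hF⟩ := Module.Dual.exists_extension_of_le_seminorm_real f.domain f.toFun hf
  refine ⟨F, ?_, hF⟩
  have hx₀ : x₀ ∈ f.domain := Submodule.mem_span_singleton_self x₀
  rw [hFf ⟨x₀, hx₀⟩]
  exact LinearPMap.mkSpanSingleton'_apply_self x₀ (p x₀) H hx₀

noncomputable def l1Norm {α : Type*} (f : α →₀ ℝ) : ℝ :=
  f.sum fun _ c => |c|

section L1Norm

variable {α : Type*}

theorem l1Norm_nonneg (f : α →₀ ℝ) : 0 ≤ l1Norm f :=
  Finset.sum_nonneg fun _ _ => abs_nonneg _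

theorem bddBelow_image_l1Norm (s : Set (α →₀ ℝ)) : BddBelow (l1Norm '' s) :=
  ⟨0, by rintro _ ⟨f, -, rfl⟩; exact l1Norm_nonneg f⟩

theorem l1Norm_single (i : α) (c : ℝ) : l1Norm (single i c) = |c| :=
  sum_single_index abs_zero

theorem l1Norm_smul (c : ℝ) (f : α →₀ ℝ) : l1Norm (c • f) = |c| * l1Norm f := by
  simp [l1Norm, sum_smul_index', abs_mul, mul_sum]

theorem l1Norm_add_le (f g : α →₀ ℝ) : l1Norm (f + g) ≤ l1Norm f + l1Norm g := by
  classical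
  have hs := support_add (g₁ := f) (g₂ := g)
  simp only [l1Norm]
  rw [sum_of_support_subset _ hs _ (fun _ _ => abs_zero),
    sum_of_support_subset f Finset.subset_union_left _ (fun _ _ => abs_zero),
    sum_of_support_subset g Finset.subset_union_right _ (fun _ _ => abs_zero),
    ← Finset.sum_add_distrib]
  exact Finset.sum_le_sum fun _ _ => abs_add_le _ _

end L1Norm

section Filling

variable {G : Type*} [Group G]

variable (G) in
noncomputable def boundary : (G × G →₀ ℝ) →ₗ[ℝ] (G →₀ ℝ) :=
  linearCombination ℝ (triangle ℝ)

theorem boundary_apply (f : G × G →₀ ℝ) (z : G) :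
    boundary G f z = ∑ i ∈ f.support, f i * (triangle ℤ i z : ℝ) := by
  simp [boundary, linearCombination_apply, Finsupp.sum, Finsupp.finsetSum_apply,
    intCast_triangle_apply]

/-- This is `0` when `y` bounds no real 2-chain, since `sInf ∅ = 0`. -/
noncomputable def fillingNorm (y : G →₀ ℝ) : ℝ :=
  sInf (l1Norm '' (boundary G ⁻¹' {y}))

theorem fillingNorm_le {y : G →₀ ℝ} {f : G × G →₀ ℝ} (hf : boundary G f = y) :
    fillingNorm y ≤ l1Norm f :=
  csInf_le (bddBelow_image_l1Norm _) ⟨f, hf, rfl⟩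

theorem le_fillingNorm {y : G →₀ ℝ} (hy : y ∈ LinearMap.range (boundary G)) {r : ℝ}
    (h : ∀ f, boundary G f = y → r ≤ l1Norm f) : r ≤ fillingNorm y := by
  obtain ⟨f, hf⟩ := hy
  exact le_csInf ⟨_, f, hf, rfl⟩ (by rintro _ ⟨f, hf, rfl⟩; exact h f hf)

theorem fillingNorm_zero : fillingNorm (0 : G →₀ ℝ) = 0 :=
  le_antisymm ((fillingNorm_le (map_zero _)).trans_eq (by simp [l1Norm]))
    (le_fillingNorm (Submodule.zero_mem _) fun f _ => l1Norm_nonneg f)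

theorem fillingNorm_add_le {x y : G →₀ ℝ} (hx : x ∈ LinearMap.range (boundary G))
    (hy : y ∈ LinearMap.range (boundary G)) :
    fillingNorm (x + y) ≤ fillingNorm x + fillingNorm y := by
  obtain ⟨f, hf⟩ := hx
  obtain ⟨g, hg⟩ := hy
  have hne : (l1Norm '' (boundary G ⁻¹' {x})).Nonempty := ⟨_, f, hf, rfl⟩
  have hne' : (l1Norm '' (boundary G ⁻¹' {y})).Nonempty := ⟨_, g, hg, rfl⟩
  unfold fillingNorm
  rw [← csInf_add hne (bddBelow_image_l1Norm _) hne' (bddBelow_image_l1Norm _)]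
  refine le_csInf (hne.add hne') ?_
  rintro _ ⟨_, ⟨f, hf, rfl⟩, _, ⟨g, hg, rfl⟩, rfl⟩
  exact (fillingNorm_le (by rw [map_add, hf, hg])).trans (l1Norm_add_le f g)

open scoped Pointwise in
theorem fillingNorm_smul (c : ℝ) (y : G →₀ ℝ) : fillingNorm (c • y) = |c| * fillingNorm y := by
  rcases eq_or_ne c 0 with rfl | hc
  · simp [fillingNorm_zero]
  have : l1Norm '' (boundary G ⁻¹' {c • y}) = |c| • l1Norm '' (boundary G ⁻¹' {y}) := by
    ext r
    simp only [Set.mem_smul_set, Set.mem_image, Set.mem_preimage, Set.mem_singleton_iff]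
    constructor
    · rintro ⟨f, hf, rfl⟩
      refine ⟨_, ⟨c⁻¹ • f, by rw [map_smul, hf, inv_smul_smul₀ hc], rfl⟩, ?_⟩
      rw [l1Norm_smul, smul_eq_mul, ← mul_assoc, abs_inv, mul_inv_cancel₀ (abs_ne_zero.mpr hc),
        one_mul]
    · rintro ⟨_, ⟨f, hf, rfl⟩, rfl⟩
      exact ⟨c • f, by rw [map_smul, hf], l1Norm_smul c f⟩
  rw [fillingNorm, this, Real.sInf_smul_of_nonneg (abs_nonneg c), smul_eq_mul, fillingNorm]

variable (G) in
noncomputable def fillingSeminorm : Seminorm ℝ (LinearMap.range (boundary G)) :=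
  Seminorm.of (fun y => fillingNorm (y : G →₀ ℝ)) (fun x y => fillingNorm_add_le x.2 y.2)
    (fun c y => by rw [Submodule.coe_smul, fillingNorm_smul, Real.norm_eq_abs])

theorem single_mem_range_boundary {w : G} (hw : w ∈ commutator G) :
    single w 1 ∈ LinearMap.range (boundary G) := by
  refine (Submodule.Quotient.mk_eq_zero _).mp (map_eq_zero_of_mem_commutator
    (φ := fun h : G => (LinearMap.range (boundary G)).mkQ (single h 1)) (fun a b => ?_) hw)
  rw [Submodule.mkQ_apply, Submodule.mkQ_apply, Submodule.mkQ_apply, ← Submodule.Quotient.mk_add,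
    Submodule.Quotient.eq]
  exact ⟨single (a, b) 1, by simp [boundary, triangle, sub_sub]⟩

theorem exists_defect_le_one_apply_eq_fillingNorm {w : G}
    (hw : single w 1 ∈ LinearMap.range (boundary G)) :
    ∃ φ₀ : G → ℝ, (∀ a b, |φ₀ (a * b) - φ₀ a - φ₀ b| ≤ 1) ∧ φ₀ w = fillingNorm (single w 1) := by
  obtain ⟨F, hFw, hF⟩ := (fillingSeminorm G).exists_dual_apply_eq_and_abs_le ⟨_, hw⟩
  obtain ⟨F', hF'⟩ := LinearMap.exists_extend F
  refine ⟨fun h => F' (single h 1), fun a b => ?_, (LinearMap.congr_fun hF' ⟨_, hw⟩).trans hFw⟩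
  have hab : boundary G (single (a, b) 1) = triangle ℝ (a, b) := by simp [boundary]
  calc |F' (single (a * b) 1) - F' (single a 1) - F' (single b 1)|
      = |F ⟨_, ⟨_, hab⟩⟩| := by
        rw [← hF']
        simp [triangle]
    _ ≤ fillingNorm (triangle ℝ (a, b)) := hF _
    _ ≤ 1 := (fillingNorm_le hab).trans_eq (by simp [l1Norm_single])

end Filling

section Homogenization

open Filter Topology

variable {G : Type*} [Group G] {φ₀ : G → ℝ} {D : ℝ}

noncomputable def homogenization (φ₀ : G → ℝ) (h : G) : ℝ :=
  limUnder atTop fun n : ℕ => φ₀ (h ^ n) / n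

variable (hd : ∀ a b, |φ₀ (a * b) - φ₀ a - φ₀ b| ≤ D)
include hd

theorem abs_apply_pow_succ_sub_le (h : G) (n : ℕ) :
    |φ₀ (h ^ (n + 1)) - (n + 1) * φ₀ h| ≤ n * D := by
  induction n with
  | zero => simp
  | succ n ih =>
    have := hd (h ^ (n + 1)) h
    rw [← pow_succ] at this
    push_cast
    calc |φ₀ (h ^ (n + 1 + 1)) - (n + 1 + 1) * φ₀ h|
        = |(φ₀ (h ^ (n + 1 + 1)) - φ₀ (h ^ (n + 1)) - φ₀ h) +
            (φ₀ (h ^ (n + 1)) - (n + 1) * φ₀ h)| := by ring_nf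
      _ ≤ D + n * D := (abs_add_le _ _).trans (add_le_add this ih)
      _ = (n + 1) * D := by ring

theorem abs_apply_pow_div_sub_le (h : G) {n : ℕ} (hn : 0 < n) :
    |φ₀ (h ^ n) / n - φ₀ h| ≤ D := by
  obtain ⟨m, rfl⟩ := Nat.exists_eq_add_one_of_ne_zero hn.ne'
  have hD : 0 ≤ D := (abs_nonneg _).trans (hd 1 1)
  have hm : (0 : ℝ) < m + 1 := by positivity
  have key : φ₀ (h ^ (m + 1)) / ↑(m + 1) - φ₀ h =
      (φ₀ (h ^ (m + 1)) - (m + 1) * φ₀ h) / (m + 1) := by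
    push_cast
    field_simp
  rw [key, abs_div, abs_of_pos hm, div_le_iff₀ hm]
  nlinarith [abs_apply_pow_succ_sub_le hd h m]

theorem tendsto_homogenization (h : G) :
    Tendsto (fun n : ℕ => φ₀ (h ^ n) / n) atTop (𝓝 (homogenization φ₀ h)) := by
  have hsub : Subadditive fun n => φ₀ (h ^ n) + D := by
    intro m n
    have := abs_le.mp (hd (h ^ m) (h ^ n))
    rw [← pow_add] at this
    linarith [this.2]
  have hbdd : BddBelow (Set.range fun n : ℕ => (φ₀ (h ^ n) + D) / n) := by
    refine ⟨min 0 (φ₀ h - D), ?_⟩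
    rintro _ ⟨n, rfl⟩
    rcases Nat.eq_zero_or_pos n with rfl | hn
    · simp
    have := abs_le.mp (abs_apply_pow_div_sub_le hd h hn)
    have : 0 ≤ D / n := div_nonneg ((abs_nonneg _).trans (hd 1 1)) n.cast_nonneg
    show min 0 (φ₀ h - D) ≤ (φ₀ (h ^ n) + D) / n
    rw [add_div]
    exact (min_le_right _ _).trans (by linarith)
  have hlim := (hsub.tendsto_lim hbdd).sub (tendsto_const_div_atTop_nhds_zero_nat D)
  simp only [add_div, add_sub_cancel_right, sub_zero] at hlim
  exact tendsto_nhds_limUnder ⟨_, hlim⟩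

theorem abs_homogenization_sub_le (h : G) : |homogenization φ₀ h - φ₀ h| ≤ D := by
  refine le_of_tendsto (((tendsto_homogenization hd h).sub_const (φ₀ h)).abs) ?_
  filter_upwards [eventually_gt_atTop 0] with n hn
  exact abs_apply_pow_div_sub_le hd h hn

theorem homogenization_pow (h : G) (k : ℕ) :
    homogenization φ₀ (h ^ k) = k * homogenization φ₀ h := by
  rcases Nat.eq_zero_or_pos k with rfl | hk
  · simpa using tendsto_nhds_unique (tendsto_homogenization hd 1)
      (by simpa using tendsto_const_div_atTop_nhds_zero_nat (φ₀ 1))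
  refine tendsto_nhds_unique (tendsto_homogenization hd (h ^ k)) ?_
  have := ((tendsto_homogenization hd h).comp
    (tendsto_id.const_mul_atTop' hk)).const_mul (k : ℝ)
  refine this.congr fun n => ?_
  have : (k : ℝ) ≠ 0 := by positivity
  simp only [Function.comp_apply, id, ← pow_mul, Nat.cast_mul]
  field_simp

theorem homogenization_inv (h : G) : homogenization φ₀ h⁻¹ = -homogenization φ₀ h := by
  have hbound : ∀ x : G, |φ₀ x⁻¹ + φ₀ x| ≤ 2 * D := by
    intro x
    have h₁ := abs_le.mp (hd x x⁻¹)
    have h₂ := abs_le.mp (hd 1 1)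
    rw [mul_inv_cancel] at h₁
    rw [one_mul] at h₂
    rw [abs_le]
    constructor <;> linarith
  have hzero : Tendsto (fun n : ℕ => φ₀ (h⁻¹ ^ n) / n + φ₀ (h ^ n) / n) atTop (𝓝 0) := by
    refine squeeze_zero_norm (fun n => ?_) (tendsto_const_div_atTop_nhds_zero_nat (2 * D))
    rw [← add_div, inv_pow, Real.norm_eq_abs, abs_div, Nat.abs_cast]
    exact div_le_div_of_nonneg_right (hbound _) n.cast_nonneg
  have := tendsto_nhds_unique
    ((tendsto_homogenization hd h⁻¹).add (tendsto_homogenization hd h)) hzero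
  linarith

theorem isHomogeneous_homogenization : IsHomogeneous (homogenization φ₀) := by
  intro h n
  obtain ⟨k, rfl | rfl⟩ := Int.eq_nat_or_neg n
  · rw [zpow_natCast, homogenization_pow hd, Int.cast_natCast]
  · rw [zpow_neg, zpow_natCast, homogenization_inv hd, homogenization_pow hd]
    push_cast
    ring

theorem isQuasimorphism_homogenization : IsQuasimorphism (homogenization φ₀) := by
  refine ⟨4 * D, ?_⟩
  rintro _ ⟨a, b, rfl⟩
  have h₁ := abs_le.mp (abs_homogenization_sub_le hd (a * b))
  have h₂ := abs_le.mp (abs_homogenization_sub_le hd a)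
  have h₃ := abs_le.mp (abs_homogenization_sub_le hd b)
  have h₄ := abs_le.mp (hd a b)
  rw [abs_le]
  constructor <;> linarith

end Homogenization

section StableCommutatorLength

variable {G : Type*} [Group G]

theorem scl_nonneg (g : G) : 0 ≤ scl g :=
  le_csInf ⟨_, 1, one_pos, rfl⟩ (by rintro _ ⟨n, -, rfl⟩; positivity)

theorem scl_le_cl_div (g : G) {n : ℕ} (hn : 0 < n) : scl g ≤ cl (g ^ n) / n :=
  csInf_le ⟨0, by rintro _ ⟨n, -, rfl⟩; positivity⟩ ⟨n, hn, rfl⟩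

theorem mul_scl_le_scl_pow (g : G) (M : ℕ) : M * scl g ≤ scl (g ^ M) := by
  rcases Nat.eq_zero_or_pos M with rfl | hM
  · simpa using scl_nonneg _
  refine le_csInf ⟨_, 1, one_pos, rfl⟩ ?_
  rintro _ ⟨n, hn, rfl⟩
  calc M * scl g ≤ M * (cl (g ^ (M * n)) / (M * n : ℕ)) :=
        mul_le_mul_of_nonneg_left (scl_le_cl_div g (Nat.mul_pos hM hn)) M.cast_nonneg
    _ = cl ((g ^ M) ^ n) / n := by
        rw [pow_mul]
        push_cast
        field_simp

theorem exists_two_mul_cl_pow_le_of_boundary_eq {w : G} {f : G × G →₀ ℝ}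
    (hf : boundary G f = single w 1) {ε : ℝ} (hε : 0 < ε) :
    ∃ N : ℕ, 0 < N ∧ (2 * cl (w ^ N) : ℝ) ≤ N * (3 * l1Norm f + 1 + ε) := by
  have hcoord : ∀ z, ∑ i ∈ f.support, f i * (triangle ℤ i z : ℝ) =
      ((single w 1 : G →₀ ℤ) z : ℝ) := by
    intro z
    classical
    rw [← boundary_apply, hf, single_apply, single_apply]
    split_ifs <;> simp
  set ε' := ε / (3 * (f.support.card + 1))
  obtain ⟨N, n, hN, hn, hbound⟩ := exists_int_solution_near f.support
    (fun i z => triangle ℤ i z) (fun z => single w 1 z) f hcoord (ε := ε') (by positivity)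
  refine ⟨N, hN, ?_⟩
  have hcl : (2 * cl (w ^ N) : ℝ) ≤ 3 * ∑ i ∈ f.support, |(n i : ℝ)| + N := by
    have hcast : ((∑ i ∈ f.support, (n i).natAbs : ℕ) : ℝ) = ∑ i ∈ f.support, |(n i : ℝ)| := by
      simp [Nat.cast_natAbs, Int.cast_abs]
    rw [← hcast]
    exact_mod_cast two_mul_cl_pow_le w N f.support n hn
  have hsum : ∑ i ∈ f.support, |(n i : ℝ)| ≤ N * (l1Norm f + ε / 3) := by
    calc ∑ i ∈ f.support, |(n i : ℝ)| ≤ ∑ i ∈ f.support, N * (|f i| + ε') :=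
          Finset.sum_le_sum hbound
      _ = N * (l1Norm f + f.support.card * ε') := by
          rw [← Finset.mul_sum, Finset.sum_add_distrib, Finset.sum_const, nsmul_eq_mul]
          rfl
      _ ≤ N * (l1Norm f + ε / 3) := by
          gcongr
          rw [mul_div_assoc', div_le_div_iff₀ (by positivity) (by positivity)]
          nlinarith
  linarith

theorem two_mul_scl_le_of_boundary_eq {w : G} {f : G × G →₀ ℝ}
    (hf : boundary G f = single w 1) : 2 * scl w ≤ 3 * l1Norm f + 1 := by
  refine le_of_forall_pos_le_add fun ε hε => ?_
  obtain ⟨N, hN, hcl⟩ := exists_two_mul_cl_pow_le_of_boundary_eq hf hε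
  have hN₀ : (0 : ℝ) < N := by exact_mod_cast hN
  calc 2 * scl w ≤ 2 * (cl (w ^ N) / N) := by gcongr; exact scl_le_cl_div w hN
    _ ≤ 3 * l1Norm f + 1 + ε := by
        rw [mul_div_assoc', div_le_iff₀ hN₀]
        linarith

theorem two_mul_scl_le_fillingNorm {w : G} (hw : single w 1 ∈ LinearMap.range (boundary G)) :
    2 * scl w ≤ 3 * fillingNorm (single w 1) + 1 := by
  have := le_fillingNorm hw (r := (2 * scl w - 1) / 3) fun f hf => by
    have := two_mul_scl_le_of_boundary_eq hf
    rw [div_le_iff₀ (by norm_num : (0 : ℝ) < 3)]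
    linarith
  rw [div_le_iff₀ (by norm_num : (0 : ℝ) < 3)] at this
  linarith

end StableCommutatorLength

/-- If every homogeneous quasimorphism on `G` is a homomorphism, then `scl` vanishes
on the commutator subgroup. -/
theorem scl_eq_zero_of_no_quasimorphisms {G : Type*} [Group G]
    (hyp : ∀ φ : G → ℝ, IsQuasimorphism φ → IsHomogeneous φ →
      ∀ a b : G, φ (a * b) = φ a + φ b)
    (g : G) (hg : g ∈ commutator G) :
    scl g = 0 := by
  by_contra hne
  have hpos : 0 < scl g := (scl_nonneg g).lt_of_ne' hne
  obtain ⟨M, hM⟩ := exists_nat_gt (2 / scl g)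
  rw [div_lt_iff₀ hpos] at hM
  have hw : g ^ M ∈ commutator G := pow_mem hg M
  have hδ := single_mem_range_boundary hw
  obtain ⟨φ₀, hd, hφ₀⟩ := exists_defect_le_one_apply_eq_fillingNorm hδ
  have hφ : homogenization φ₀ (g ^ M) = 0 := map_eq_zero_of_mem_commutator
    (hyp _ (isQuasimorphism_homogenization hd) (isHomogeneous_homogenization hd)) hw
  have hclose := abs_le.mp (abs_homogenization_sub_le hd (g ^ M))
  have hfill := two_mul_scl_le_fillingNorm hδ
  have hscl := mul_scl_le_scl_pow g M
  linarith
end
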